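/- For every β > 0 there exists a constant C_β > 0 such that for every η ∈ ℝ³ and every a ∈ (0,1]: ∫_{S²} ∫_{ℝ³} 𝟙{ |(v − η) × ν| ≤ a } e^{−(β/2)|v|²} dv dν ≤ C_β a², where dν is the surface measure on the unit sphere S² ⊂ ℝ³ and × denotes the cross product. -/

import Mathlib

/-!
Choose an orthonormal basis whose third vector is `ν`. In these coordinates
`|(v - η) × ν|²` is the sum of the squares of the first two coordinates of `v - η`, so the
cylinder `|(v - η) × ν| ≤ a` lies in the slab where those two coordinates are within `a` of
the ones of `η`, and `e^{-(β/2)|v|²} ≤ e^{-(β/2) v₃²}`. By Fubini the inner integral is then at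
most `(2a)² √(2π/β)`, uniformly in `ν` and `η`, and the sphere has finite measure.
-/

open MeasureTheory Set Metric
open scoped ENNReal

noncomputable section

abbrev R3 : Type := EuclideanSpace ℝ (Fin 3)

/-- The surface measure on the unit sphere `S² ⊂ ℝ³`. -/
def sphereMeasure : Measure (Metric.sphere (0 : R3) 1) := (volume : Measure R3).toSphere

/-- Real-valued indicator of a proposition. -/
def ind (P : Prop) : ℝ :=
  letI := Classical.propDecidable P
  if P then 1 else 0

/-- The cross product on `ℝ³` (with the Euclidean norm). -/
def cross3 (v u : R3) : R3 :=
  (EuclideanSpace.equiv (Fin 3) ℝ).symm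
    ![v 1 * u 2 - v 2 * u 1, v 2 * u 0 - v 0 * u 2, v 0 * u 1 - v 1 * u 0]

open Real

lemma ind_nonneg (P : Prop) : 0 ≤ ind P := by
  unfold ind; split <;> norm_num

lemma ind_mono {P Q : Prop} (h : P → Q) : ind P ≤ ind Q := by
  unfold ind; split_ifs <;> grind

lemma ind_and (P Q : Prop) : ind (P ∧ Q) = ind P * ind Q := by
  unfold ind; split_ifs <;> grind

lemma ind_mem {α : Type*} (s : Set α) (x : α) : ind (x ∈ s) = s.indicator 1 x := by
  unfold ind; split_ifs with h <;> simp [h]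

lemma ind_abs_sub_le (c a x : ℝ) : ind (|x - c| ≤ a) = (closedBall c a).indicator 1 x := by
  rw [← ind_mem, mem_closedBall, Real.dist_eq]

lemma integrable_ind_abs_sub_le (c a : ℝ) : Integrable fun x : ℝ ↦ ind (|x - c| ≤ a) := by
  simp_rw [ind_abs_sub_le]
  exact (integrable_indicator_iff measurableSet_closedBall).2
    (integrableOn_const measure_closedBall_lt_top.ne)

lemma integral_ind_abs_sub_le (c : ℝ) {a : ℝ} (ha : 0 ≤ a) :
    ∫ x : ℝ, ind (|x - c| ≤ a) = 2 * a := by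
  simp_rw [ind_abs_sub_le, integral_indicator_one measurableSet_closedBall,
    Real.volume_real_closedBall ha]

lemma integral_fin_three_mul (f g h : ℝ → ℝ) :
    ∫ x : Fin 3 → ℝ, f (x 0) * g (x 1) * h (x 2) = (∫ t, f t) * (∫ t, g t) * ∫ t, h t := by
  simpa [Fin.prod_univ_three] using integral_fintype_prod_volume_eq_prod ![f, g, h]

lemma MeasureTheory.Integrable.fin_three_mul {f g h : ℝ → ℝ} (hf : Integrable f)
    (hg : Integrable g) (hh : Integrable h) :
    Integrable fun x : Fin 3 → ℝ ↦ f (x 0) * g (x 1) * h (x 2) := by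
  rw [volume_pi]
  simpa [Fin.prod_univ_three] using
    Integrable.fintype_prod (f := ![f, g, h]) (μ := fun _ ↦ volume)
      (by simp [Fin.forall_fin_succ, *])

lemma norm_cross3_sq (w u : R3) : ‖cross3 w u‖ ^ 2 = ‖w‖ ^ 2 * ‖u‖ ^ 2 - inner ℝ w u ^ 2 := by
  simp only [cross3, PiLp.continuousLinearEquiv_symm_apply, EuclideanSpace.norm_sq_eq,
    norm_eq_abs, sq_abs, Fin.sum_univ_three, Matrix.cons_val_zero, Matrix.cons_val_one,
    Matrix.cons_val, PiLp.inner_apply, RCLike.inner_apply, ringHom_apply]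
  ring

lemma norm_cross3_orthonormalBasis_two_sq (b : OrthonormalBasis (Fin 3) ℝ R3) (w : R3) :
    ‖cross3 w (b 2)‖ ^ 2 = b.repr w 0 ^ 2 + b.repr w 1 ^ 2 := by
  rw [norm_cross3_sq, b.orthonormal.1 2, real_inner_comm, ← b.repr_apply_apply,
    ← b.repr.norm_map, EuclideanSpace.norm_sq_eq, Fin.sum_univ_three]
  simp only [Real.norm_eq_abs, sq_abs]
  ring

lemma exists_orthonormalBasis_apply_eq {ι E : Type*} [Fintype ι] [NormedAddCommGroup E]
    [InnerProductSpace ℝ E] [FiniteDimensional ℝ E]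
    (hcard : Module.finrank ℝ E = Fintype.card ι) (i : ι) {ν : E} (hν : ‖ν‖ = 1) :
    ∃ b : OrthonormalBasis ι ℝ E, b i = ν := by
  have horth : Orthonormal ℝ (Set.domRestrict ({i} : Set ι) fun _ ↦ ν) :=
    ⟨fun _ ↦ hν, fun j k hjk ↦ absurd (Subtype.ext (j.2.trans k.2.symm)) hjk⟩
  obtain ⟨b, hb⟩ := horth.exists_orthonormalBasis_extension_of_card_eq hcard
  exact ⟨b, hb i rfl⟩

lemma OrthonormalBasis.integral_comp_repr_symm_toLp {ι E F : Type*} [Fintype ι]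
    [NormedAddCommGroup E] [InnerProductSpace ℝ E] [FiniteDimensional ℝ E] [MeasurableSpace E]
    [BorelSpace E] [NormedAddCommGroup F] [NormedSpace ℝ F]
    (b : OrthonormalBasis ι ℝ E) (f : E → F) :
    ∫ x : ι → ℝ, f (b.repr.symm (WithLp.toLp 2 x)) = ∫ v, f v := by
  rw [(PiLp.volume_preserving_toLp ι).integral_comp (MeasurableEquiv.toLp 2 _).measurableEmbedding
      (fun y ↦ f (b.repr.symm y)),
    b.measurePreserving_repr_symm.integral_comp b.repr.symm.toHomeomorph.measurableEmbedding]

lemma OrthonormalBasis.sq_repr_apply_le_norm_sq {ι E : Type*} [Fintype ι] [NormedAddCommGroup E]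
    [InnerProductSpace ℝ E] (b : OrthonormalBasis ι ℝ E) (v : E) (i : ι) :
    b.repr v i ^ 2 ≤ ‖v‖ ^ 2 := by
  rw [sq_le_sq, abs_norm, ← Real.norm_eq_abs, ← b.repr.norm_map v]
  exact PiLp.norm_apply_le _ i

lemma abs_repr_le_of_norm_cross3_le {b : OrthonormalBasis (Fin 3) ℝ R3} {w : R3} {a : ℝ}
    (h : ‖cross3 w (b 2)‖ ≤ a) : |b.repr w 0| ≤ a ∧ |b.repr w 1| ≤ a := by
  have ha : 0 ≤ a := (norm_nonneg _).trans h
  have hsq : b.repr w 0 ^ 2 + b.repr w 1 ^ 2 ≤ a ^ 2 := by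
    rw [← norm_cross3_orthonormalBasis_two_sq]
    exact pow_le_pow_left₀ (norm_nonneg _) h 2
  exact ⟨abs_le_of_sq_le_sq (by nlinarith [sq_nonneg (b.repr w 1)]) ha,
    abs_le_of_sq_le_sq (by nlinarith [sq_nonneg (b.repr w 0)]) ha⟩

lemma ind_norm_cross3_le_mul_exp_le (b : OrthonormalBasis (Fin 3) ℝ R3) (η v : R3) (a : ℝ)
    {β : ℝ} (hβ : 0 ≤ β) :
    ind (‖cross3 (v - η) (b 2)‖ ≤ a) * exp (-(β / 2) * ‖v‖ ^ 2) ≤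
      ind (|b.repr v 0 - b.repr η 0| ≤ a) * ind (|b.repr v 1 - b.repr η 1| ≤ a) *
        exp (-(β / 2) * b.repr v 2 ^ 2) := by
  have hcyl := @abs_repr_le_of_norm_cross3_le b (v - η) a
  simp only [map_sub, PiLp.sub_apply] at hcyl
  have hexp : exp (-(β / 2) * ‖v‖ ^ 2) ≤ exp (-(β / 2) * b.repr v 2 ^ 2) :=
    exp_le_exp.2 <| mul_le_mul_of_nonpos_left (b.sq_repr_apply_le_norm_sq v 2) (by linarith)
  rw [← ind_and]
  exact mul_le_mul (ind_mono hcyl) hexp (exp_pos _).le (ind_nonneg _)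

lemma integral_ind_norm_cross3_le_mul_exp_le {β : ℝ} (hβ : 0 < β) (η : R3) {ν : R3}
    (hν : ‖ν‖ = 1) {a : ℝ} (ha : 0 ≤ a) :
    ∫ v : R3, ind (‖cross3 (v - η) ν‖ ≤ a) * exp (-(β / 2) * ‖v‖ ^ 2) ≤
      4 * √(π / (β / 2)) * a ^ 2 := by
  obtain ⟨b, rfl⟩ := exists_orthonormalBasis_apply_eq (by simp) (2 : Fin 3) hν
  set c := b.repr η
  have hslab : Integrable fun x : Fin 3 → ℝ ↦
      ind (|x 0 - c 0| ≤ a) * ind (|x 1 - c 1| ≤ a) * exp (-(β / 2) * x 2 ^ 2) :=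
    (integrable_ind_abs_sub_le _ _).fin_three_mul (integrable_ind_abs_sub_le _ _)
      (integrable_exp_neg_mul_sq (by linarith))
  rw [← b.integral_comp_repr_symm_toLp]
  calc _ ≤ ∫ x : Fin 3 → ℝ,
          ind (|x 0 - c 0| ≤ a) * ind (|x 1 - c 1| ≤ a) * exp (-(β / 2) * x 2 ^ 2) := by
        refine integral_mono_of_nonneg (.of_forall fun _ ↦ ?_) hslab (.of_forall fun x ↦ ?_)
        · exact mul_nonneg (ind_nonneg _) (exp_pos _).le
        · simpa using ind_norm_cross3_le_mul_exp_le b η (b.repr.symm (WithLp.toLp 2 x)) a hβ.le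
    _ = 4 * √(π / (β / 2)) * a ^ 2 := by
        rw [integral_fin_three_mul (fun t ↦ ind (|t - c 0| ≤ a)) (fun t ↦ ind (|t - c 1| ≤ a))
          (fun t ↦ exp (-(β / 2) * t ^ 2)), integral_ind_abs_sub_le _ ha,
          integral_ind_abs_sub_le _ ha, integral_gaussian]
        ring

instance : IsFiniteMeasure sphereMeasure := by
  unfold sphereMeasure; infer_instance

/-- **Grazing-collision cutoff estimate** (error term `ℰ₆` in the proof of Theorem 2):
for every `β > 0` there is `C_β > 0` such that for every `η ∈ ℝ³` and `a ∈ (0,1]`,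
`∫_{S²} ∫_{ℝ³} 𝟙{|(v − η) × ν| ≤ a} e^{−(β/2)|v|²} dv dν ≤ C_β a²`. -/
theorem grazing_collision_cutoff_estimate
    (β : ℝ) (hβ : 0 < β) :
    ∃ Cβ > (0 : ℝ),
      ∀ η : R3, ∀ a : ℝ, 0 < a → a ≤ 1 →
        (∫ ν : Metric.sphere (0 : R3) 1,
            (∫ v : R3,
              ind (‖cross3 (v - η) (ν : R3)‖ ≤ a) * Real.exp (-(β / 2) * ‖v‖ ^ 2))
          ∂sphereMeasure)
          ≤ Cβ * a ^ 2 := by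
  set K := 4 * √(π / (β / 2))
  set M := sphereMeasure.real univ
  refine ⟨K * (M + 1), by positivity, fun η a ha _ ↦ ?_⟩
  have hinner (ν : sphere (0 : R3) 1) :
      ‖∫ v : R3, ind (‖cross3 (v - η) ν‖ ≤ a) * exp (-(β / 2) * ‖v‖ ^ 2)‖ ≤ K * a ^ 2 := by
    rw [Real.norm_of_nonneg (integral_nonneg fun _ ↦ mul_nonneg (ind_nonneg _) (exp_pos _).le)]
    exact integral_ind_norm_cross3_le_mul_exp_le hβ η (norm_eq_of_mem_sphere ν) ha.le
  calc _ ≤ K * a ^ 2 * M :=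
        (le_abs_self _).trans (norm_integral_le_of_norm_le_const (.of_forall hinner))
    _ ≤ K * (M + 1) * a ^ 2 := by nlinarith [show 0 ≤ K * a ^ 2 by positivity]
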